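/- Let f : ℝ^n → ℝ be an M-self-concordant-like function (so exp(−M‖y−x‖)∇²f(x) ⪯ ∇²f(y) for all x,y). Then for all β₁, β₂ with ‖β₁‖, ‖β₂‖ ≤ W and all u ∈ ℝ^n, uᵀ (∫₀¹ ∇²f(β₁ + z(β₂ − β₁)) dz) u ≥ (1/(1 + 2MW)) uᵀ ∇²f(β₁) u. -/

import Mathlib

/-!
Applying self-concordance in both directions squeezes the curvature `h x = uᵀ ∇²f(x) u` between
`exp (-M d) * h x` and `exp (M d) * h x` at distance `d` from `x`. This makes `h` continuous and,
since `exp (-2 M d) < 1` for `d > 0`, nonnegative. Along the segment from `β₁` to `β₂` (of length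
at most `2W`) it is therefore at least `exp (-2MWz) * h β₁`, and
`∫₀¹ exp (-c z) dz = (1 - exp (-c)) / c ≥ 1 / (1 + c)` because `exp c ≥ 1 + c`.
-/

/-- Directional second derivative of `f` at `x` along `u`:
`uᵀ ∇²f(x) u = d²/dt² f(x + t u) |_{t=0}`. -/
noncomputable def dirD2 {n : ℕ} (f : EuclideanSpace ℝ (Fin n) → ℝ)
    (x u : EuclideanSpace ℝ (Fin n)) : ℝ :=
  iteratedDeriv 2 (fun t : ℝ => f (x + t • u)) 0

open Real

section ExpDistControl

variable {X : Type*} {h : X → ℝ} {M : ℝ}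

lemma le_exp_mul_dist_mul_of_exp_neg_mul_dist_mul_le [PseudoMetricSpace X]
    (hh : ∀ x y, exp (-(M * dist y x)) * h x ≤ h y) (x y : X) :
    h y ≤ exp (M * dist y x) * h x := by
  have := mul_le_mul_of_nonneg_left (hh y x) (exp_pos (M * dist y x)).le
  rwa [dist_comm x y, ← mul_assoc, ← exp_add, add_neg_cancel, exp_zero, one_mul] at this

lemma continuous_of_exp_neg_mul_dist_mul_le [PseudoMetricSpace X]
    (hh : ∀ x y, exp (-(M * dist y x)) * h x ≤ h y) : Continuous h := by
  refine continuous_iff_continuousAt.2 fun x => ?_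
  have hlim : ∀ s : ℝ, Filter.Tendsto (fun y => exp (s * dist y x) * h x) (nhds x) (nhds (h x)) :=
    fun s => by
      simpa using ((continuous_const.mul (continuous_id.dist continuous_const)).rexp.mul
        continuous_const).tendsto (f := fun y : X => exp (s * dist y x) * h x) x
  refine tendsto_of_tendsto_of_tendsto_of_le_of_le (hlim (-M)) (hlim M) (fun y => ?_)
    (le_exp_mul_dist_mul_of_exp_neg_mul_dist_mul_le hh x)
  simpa only [neg_mul] using hh x y

lemma nonneg_of_exp_neg_mul_dist_mul_le [MetricSpace X] (hM : 0 < M)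
    (hh : ∀ x y, exp (-(M * dist y x)) * h x ≤ h y) {x y : X} (hxy : x ≠ y) : 0 ≤ h x := by
  have hround : exp (-(M * dist x y)) * (exp (-(M * dist y x)) * h x) ≤ h x :=
    (mul_le_mul_of_nonneg_left (hh x y) (exp_pos _).le).trans (hh y x)
  rw [dist_comm x y] at hround
  have hlt : exp (-(M * dist y x)) < 1 :=
    exp_lt_one_iff.2 (neg_lt_zero.2 (mul_pos hM (dist_pos.2 hxy.symm)))
  have hsq : exp (-(M * dist y x)) * exp (-(M * dist y x)) < 1 := by
    nlinarith [exp_pos (-(M * dist y x))]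
  nlinarith

end ExpDistControl

lemma one_div_one_add_le_one_sub_exp_neg_div {c : ℝ} (hc : 0 < c) :
    1 / (1 + c) ≤ (1 - exp (-c)) / c := by
  rw [div_le_div_iff₀ (by linarith) hc, exp_neg]
  field_simp
  nlinarith [add_one_le_exp c, exp_pos c]

lemma integral_exp_neg_mul {c : ℝ} (hc : c ≠ 0) :
    ∫ z in (0:ℝ)..1, exp (-(c * z)) = (1 - exp (-c)) / c := by
  simp_rw [← neg_mul]
  rw [intervalIntegral.integral_comp_mul_left exp (neg_ne_zero.2 hc), integral_exp]
  simp only [mul_one, mul_zero, exp_zero, smul_eq_mul]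
  rw [inv_neg, div_eq_inv_mul]
  ring

lemma one_div_one_add_le_integral_exp_neg_mul {c : ℝ} (hc : 0 ≤ c) :
    1 / (1 + c) ≤ ∫ z in (0:ℝ)..1, exp (-(c * z)) := by
  rcases hc.eq_or_lt with rfl | hc
  · simp
  · rw [integral_exp_neg_mul hc.ne']
    exact one_div_one_add_le_one_sub_exp_neg_div hc

section Segment

variable {E : Type*} [NormedAddCommGroup E] [NormedSpace ℝ E] {h : E → ℝ} {M c : ℝ} {x y : E}

lemma exp_neg_mul_mul_le_apply_add_smul_sub
    (hh : ∀ x y, exp (-(M * dist y x)) * h x ≤ h y) (hx : 0 ≤ h x) (hc : M * ‖y - x‖ ≤ c)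
    {z : ℝ} (hz : 0 ≤ z) : exp (-(c * z)) * h x ≤ h (x + z • (y - x)) := by
  have hdist : dist (x + z • (y - x)) x = z * ‖y - x‖ := by
    rw [dist_eq_norm, add_sub_cancel_left, norm_smul, norm_of_nonneg hz]
  refine le_trans (mul_le_mul_of_nonneg_right (exp_le_exp.2 ?_) hx) (hh x _)
  rw [hdist, neg_le_neg_iff]
  nlinarith

lemma one_div_one_add_mul_le_integral_apply_add_smul_sub (hM : 0 ≤ M)
    (hh : ∀ x y, exp (-(M * dist y x)) * h x ≤ h y) (hx : 0 ≤ h x) (hc : M * ‖y - x‖ ≤ c) :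
    1 / (1 + c) * h x ≤ ∫ z in (0:ℝ)..1, h (x + z • (y - x)) := by
  have hc0 : 0 ≤ c := (mul_nonneg hM (norm_nonneg _)).trans hc
  have hcont : Continuous fun z : ℝ => h (x + z • (y - x)) :=
    (continuous_of_exp_neg_mul_dist_mul_le hh).comp (by fun_prop)
  calc 1 / (1 + c) * h x ≤ (∫ z in (0:ℝ)..1, exp (-(c * z))) * h x :=
        mul_le_mul_of_nonneg_right (one_div_one_add_le_integral_exp_neg_mul hc0) hx
    _ = ∫ z in (0:ℝ)..1, exp (-(c * z)) * h x := (intervalIntegral.integral_mul_const _ _).symm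
    _ ≤ ∫ z in (0:ℝ)..1, h (x + z • (y - x)) :=
        intervalIntegral.integral_mono_on zero_le_one
          ((by fun_prop : Continuous fun z : ℝ => exp (-(c * z)) * h x).intervalIntegrable 0 1)
          (hcont.intervalIntegrable 0 1)
          fun z hz => exp_neg_mul_mul_le_apply_add_smul_sub hh hx hc hz.1

end Segment

lemma dirD2_zero_right {n : ℕ} (f : EuclideanSpace ℝ (Fin n) → ℝ) (x : EuclideanSpace ℝ (Fin n)) :
    dirD2 f x 0 = 0 := by
  simp [dirD2, iteratedDeriv_succ]

lemma dirD2_nonneg {n : ℕ} {f : EuclideanSpace ℝ (Fin n) → ℝ} {M : ℝ}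
    {u : EuclideanSpace ℝ (Fin n)} (hM : 0 < M)
    (hsc : ∀ x y, exp (-(M * dist y x)) * dirD2 f x u ≤ dirD2 f y u)
    (x : EuclideanSpace ℝ (Fin n)) : 0 ≤ dirD2 f x u := by
  rcases eq_or_ne u 0 with rfl | hu
  · rw [dirD2_zero_right]
  · exact nonneg_of_exp_neg_mul_dist_mul_le hM hsc (add_ne_left.2 hu).symm

theorem stmt_10_general (n : ℕ) (f : EuclideanSpace ℝ (Fin n) → ℝ) (M W : ℝ)
    (hM : 0 < M)
    (hsc : ∀ x y u : EuclideanSpace ℝ (Fin n),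
      Real.exp (-(M * ‖y - x‖)) * dirD2 f x u ≤ dirD2 f y u) :
    ∀ β₁ β₂ : EuclideanSpace ℝ (Fin n), ‖β₁‖ ≤ W → ‖β₂‖ ≤ W →
      ∀ u : EuclideanSpace ℝ (Fin n),
        (1 / (1 + 2 * M * W)) * dirD2 f β₁ u ≤
          ∫ z in (0:ℝ)..1, dirD2 f (β₁ + z • (β₂ - β₁)) u := by
  intro β₁ β₂ hβ₁ hβ₂ u
  have hsc_dist : ∀ x y, exp (-(M * dist y x)) * dirD2 f x u ≤ dirD2 f y u := fun x y => by
    simpa only [dist_eq_norm] using hsc x y u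
  have hdiam : M * ‖β₂ - β₁‖ ≤ 2 * M * W := by
    calc M * ‖β₂ - β₁‖ ≤ M * (2 * W) := by gcongr; linarith [norm_sub_le β₂ β₁]
      _ = 2 * M * W := by ring
  exact one_div_one_add_mul_le_integral_apply_add_smul_sub (h := (dirD2 f · u)) hM.le hsc_dist
    (dirD2_nonneg hM hsc_dist β₁) hdiam

theorem stmt_10 (n : ℕ) (f : EuclideanSpace ℝ (Fin n) → ℝ) (M W : ℝ)
    (hM : 0 < M) (hW : 0 < W) (hf : ContDiff ℝ 3 f)
    (hsc : ∀ x y u : EuclideanSpace ℝ (Fin n),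
      Real.exp (-(M * ‖y - x‖)) * dirD2 f x u ≤ dirD2 f y u) :
    ∀ β₁ β₂ : EuclideanSpace ℝ (Fin n), ‖β₁‖ ≤ W → ‖β₂‖ ≤ W →
      ∀ u : EuclideanSpace ℝ (Fin n),
        (1 / (1 + 2 * M * W)) * dirD2 f β₁ u ≤
          ∫ z in (0:ℝ)..1, dirD2 f (β₁ + z • (β₂ - β₁)) u :=
  stmt_10_general n f M W hM hsc
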